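/- If a quadrature rule with points {ζᵢ} and weights {wᵢ^ζ} on [0,1] integrates exactly all polynomials of degree at most 2k+1 against the weight (1−ζ), and a rule {ηⱼ}, {wⱼ^η} integrates exactly all polynomials of degree at most 2k+1 against weight 1, then the product rule with points (ζᵢ, (1−ζᵢ)ηⱼ) and weights wᵢ^ζ wⱼ^η integrates exactly over the unit triangle every bivariate polynomial of total degree at most 2k. -/

import Mathlib

/-! Both sides are linear in `f`, so it suffices to treat a monomial `x^a y^b` with
`a + b ≤ 2k`. The substitution `y = (1 - x) t` factors its integral over the triangle as
`(∫ x^a (1-x)^b (1-x) dx) (∫ t^b dt)`, and the product rule factors the same way into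
`(∑ ζᵢ^a (1-ζᵢ)^b wᵢ^ζ) (∑ ηⱼ^b wⱼ^η)`; the one-dimensional rules are exact on these factors,
whose degrees `a + b` and `b` are at most `2k`. -/

open Polynomial

theorem MvPolynomial.eval_monomial_fin_two {R : Type*} [CommSemiring R] (v : Fin 2 → R)
    (d : Fin 2 →₀ ℕ) (c : R) :
    MvPolynomial.eval v (MvPolynomial.monomial d c) = c * (v 0 ^ d 0 * v 1 ^ d 1) := by
  rw [MvPolynomial.eval_monomial, Finsupp.prod_fintype _ _ (fun _ => pow_zero _), Fin.prod_univ_two]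

theorem Finsupp.sum_id_fin_two (d : Fin 2 →₀ ℕ) : (d.sum fun _ e => e) = d 0 + d 1 := by
  rw [Finsupp.sum_fintype _ _ (fun _ => rfl), Fin.sum_univ_two]

theorem Polynomial.natDegree_X_pow_mul_one_sub_X_pow_le {R : Type*} [Ring R] (a b : ℕ) :
    ((X : R[X]) ^ a * (1 - X) ^ b).natDegree ≤ a + b := by
  compute_degree

theorem MvPolynomial.continuous_eval_vecCons_fin_two (f : MvPolynomial (Fin 2) ℝ) :
    Continuous fun p : ℝ × ℝ => MvPolynomial.eval ![p.1, p.2] f :=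
  (MvPolynomial.continuous_eval f).comp (by fun_prop)

section

variable {ι ι' : Type*} [Fintype ι] [Fintype ι']

noncomputable def duffyProductRule (ζ wζ : ι → ℝ) (η wη : ι' → ℝ) :
    MvPolynomial (Fin 2) ℝ →ₗ[ℝ] ℝ where
  toFun f := ∑ i, ∑ j, MvPolynomial.eval ![ζ i, (1 - ζ i) * η j] f * (wζ i * wη j)
  map_add' f g := by simp only [map_add, add_mul, Finset.sum_add_distrib]
  map_smul' c f := by
    simp only [MvPolynomial.smul_eval, smul_eq_mul, RingHom.id_apply, Finset.mul_sum, mul_assoc]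

theorem duffyProductRule_monomial (ζ wζ : ι → ℝ) (η wη : ι' → ℝ) (d : Fin 2 →₀ ℕ) (c : ℝ) :
    duffyProductRule ζ wζ η wη (MvPolynomial.monomial d c) =
      c * ((∑ i, (X ^ d 0 * (1 - X) ^ d 1 : ℝ[X]).eval (ζ i) * wζ i) *
        ∑ j, (X ^ d 1 : ℝ[X]).eval (η j) * wη j) := by
  simp only [duffyProductRule, LinearMap.coe_mk, AddHom.coe_mk,
    MvPolynomial.eval_monomial_fin_two, Matrix.cons_val_zero, Matrix.cons_val_one, eval_mul,
    eval_pow, eval_sub, eval_one, eval_X, mul_pow]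
  rw [Finset.sum_mul_sum, Finset.mul_sum]
  refine Finset.sum_congr rfl fun i _ => ?_
  rw [Finset.mul_sum]
  exact Finset.sum_congr rfl fun j _ => by ring

end

theorem intervalIntegrable_eval_vecCons_fin_two (f : MvPolynomial (Fin 2) ℝ) (x a b : ℝ) :
    IntervalIntegrable (fun y => MvPolynomial.eval ![x, y] f) MeasureTheory.volume a b :=
  ((MvPolynomial.continuous_eval f).comp (by fun_prop)).intervalIntegrable a b

theorem continuous_intervalIntegral_eval_zero_one_sub (f : MvPolynomial (Fin 2) ℝ) :
    Continuous fun x : ℝ => ∫ y in (0:ℝ)..(1 - x), MvPolynomial.eval ![x, y] f :=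
  intervalIntegral.continuous_parametric_intervalIntegral_of_continuous
    (MvPolynomial.continuous_eval_vecCons_fin_two f) (by fun_prop)

noncomputable def triangleIntegral : MvPolynomial (Fin 2) ℝ →ₗ[ℝ] ℝ where
  toFun f := ∫ x in (0:ℝ)..1, ∫ y in (0:ℝ)..(1 - x), MvPolynomial.eval ![x, y] f
  map_add' f g := by
    simp only [map_add,
      intervalIntegral.integral_add (intervalIntegrable_eval_vecCons_fin_two f _ _ _)
        (intervalIntegrable_eval_vecCons_fin_two g _ _ _)]
    exact intervalIntegral.integral_add
      ((continuous_intervalIntegral_eval_zero_one_sub f).intervalIntegrable _ _)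
      ((continuous_intervalIntegral_eval_zero_one_sub g).intervalIntegrable _ _)
  map_smul' c f := by
    simp only [MvPolynomial.smul_eval, smul_eq_mul, RingHom.id_apply,
      intervalIntegral.integral_const_mul]

theorem triangleIntegral_monomial (d : Fin 2 →₀ ℕ) (c : ℝ) :
    triangleIntegral (MvPolynomial.monomial d c) =
      c * ((∫ t in (0:ℝ)..1, (X ^ d 0 * (1 - X) ^ d 1 : ℝ[X]).eval t * (1 - t)) *
        ∫ t in (0:ℝ)..1, (X ^ d 1 : ℝ[X]).eval t) := by
  have hslice (x : ℝ) : ∫ y in (0:ℝ)..(1 - x), c * (x ^ d 0 * y ^ d 1) =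
      c * (x ^ d 0 * (1 - x) ^ d 1 * (1 - x)) * ∫ t in (0:ℝ)..1, t ^ d 1 := by
    simp only [intervalIntegral.integral_const_mul, integral_pow]
    ring
  simp only [triangleIntegral, LinearMap.coe_mk, AddHom.coe_mk,
    MvPolynomial.eval_monomial_fin_two, Matrix.cons_val_zero, Matrix.cons_val_one, hslice,
    intervalIntegral.integral_mul_const, intervalIntegral.integral_const_mul, eval_mul, eval_pow,
    eval_sub, eval_one, eval_X]
  ring

/-- If a rule `{ζᵢ},{wᵢ^ζ}` on `[0,1]` is exact for polynomials of degree at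
most `2k+1` against the weight `(1−ζ)`, and a rule `{ηⱼ},{wⱼ^η}` is exact for
polynomials of degree at most `2k+1` against weight `1`, then the product rule
with points `(ζᵢ, (1−ζᵢ)ηⱼ)` and weights `wᵢ^ζ wⱼ^η` integrates exactly over
the unit triangle every bivariate polynomial of total degree at most `2k`. -/
theorem duffy_product_quadrature (k : ℕ)
    {ι ι' : Type*} [Fintype ι] [Fintype ι']
    (ζ wζ : ι → ℝ) (η wη : ι' → ℝ)
    (hζ : ∀ p : Polynomial ℝ, p.natDegree ≤ 2 * k + 1 →
      ∑ i, p.eval (ζ i) * wζ i = ∫ t in (0:ℝ)..1, p.eval t * (1 - t))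
    (hη : ∀ p : Polynomial ℝ, p.natDegree ≤ 2 * k + 1 →
      ∑ j, p.eval (η j) * wη j = ∫ t in (0:ℝ)..1, p.eval t) :
    ∀ f : MvPolynomial (Fin 2) ℝ, f.totalDegree ≤ 2 * k →
      ∑ i, ∑ j, MvPolynomial.eval ![ζ i, (1 - ζ i) * η j] f * (wζ i * wη j) =
        ∫ x in (0:ℝ)..1, ∫ y in (0:ℝ)..(1 - x), MvPolynomial.eval ![x, y] f := by
  intro f hf
  change duffyProductRule ζ wζ η wη f = triangleIntegral f
  rw [f.as_sum, map_sum, map_sum]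
  refine Finset.sum_congr rfl fun d hd => ?_
  have hdeg : d 0 + d 1 ≤ 2 * k :=
    d.sum_id_fin_two ▸ (MvPolynomial.le_totalDegree hd).trans hf
  rw [duffyProductRule_monomial, triangleIntegral_monomial,
    hζ _ ((natDegree_X_pow_mul_one_sub_X_pow_le _ _).trans (by omega)),
    hη _ ((natDegree_X_pow_le _).trans (by omega))]
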